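/- Let (fₙ)_{n∈ℕ} be Borel measurable functions fₙ : 𝕋³ → ℝ³ and let (ν_x)_{x∈𝕋³} be a family of Borel probability measures on ℝ³ such that x ↦ ν_x(E) is Borel measurable for every Borel E ⊆ ℝ³, and assume that for every bounded continuous φ : ℝ³ → ℝ and every bounded continuous ψ : 𝕋³ → ℝ, lim_{n→∞} ∫_{𝕋³} φ(fₙ(x)) ψ(x) dx = ∫_{𝕋³} ( ∫_{ℝ³} φ(y) ν_x(dy) ) ψ(x) dx. Fix x₀ ∈ 𝕋³ and ε > 0, and let ν^n_{x₀,ε} be the local occupation measure of fₙ around x₀ of size ε. Then for every bounded continuous φ : ℝ³ → ℝ, lim_{n→∞} ∫_{ℝ³} φ(y) ν^n_{x₀,ε}(dy) = (1/Leb(B(x₀,ε))) ∫_{B(x₀,ε)} ( ∫_{ℝ³} φ(y) ν_x(dy) ) dx; that is, ν^n_{x₀,ε} converges weakly to the average (1/Leb(B(x₀,ε))) ∫_{B(x₀,ε)} ν_x dx. -/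

import Mathlib

/-! For bounded `φ`, both `ψ ↦ ∫ φ(fₙ x) ψ x dx` and `ψ ↦ ∫ (∫ φ dνₓ) ψ x dx` are bounded by
`‖φ‖ ‖ψ‖_{L¹}`, uniformly in `n`. Convergence on bounded continuous `ψ`, which are dense in `L¹`,
therefore extends to every integrable `ψ`, in particular to the indicator of the ball
`B(x₀, ε)`, which turns the pairing into the integral against the occupation measure. -/

open MeasureTheory

noncomputable section

instance : Fact (0 < 2 * Real.pi) := ⟨Real.two_pi_pos⟩

/-- The three-dimensional torus `𝕋³ = ℝ³/(2πℤ)³`, with its quotient metric (coordinatewise)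
and its Haar (Lebesgue) measure `Leb` of total mass `(2π)³`. -/
abbrev Torus3 := Fin 3 → AddCircle (2 * Real.pi)

abbrev E3 := EuclideanSpace ℝ (Fin 3)

/-- The local occupation measure of `f` around `x₀` of size `ε`: the pushforward under `f`
of the normalized Lebesgue measure `(1/Leb(B(x₀,ε))) Leb|_{B(x₀,ε)}` on the ball
`B(x₀,ε) ⊆ 𝕋³`. -/
def occupationMeasure (f : Torus3 → E3) (x₀ : Torus3) (ε : ℝ) : Measure E3 :=
  (volume (Metric.ball x₀ ε))⁻¹ • Measure.map f (volume.restrict (Metric.ball x₀ ε))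

open Filter Topology
open scoped BoundedContinuousFunction ENNReal

namespace MeasureTheory

variable {X : Type*} [MeasurableSpace X] {μ : Measure X}

theorem dist_integral_mul_le_mul_integral_norm_sub {g ψ ψ' : X → ℝ} {C : ℝ}
    (hg : AEStronglyMeasurable g μ) (hgC : ∀ᵐ x ∂μ, ‖g x‖ ≤ C)
    (hψ : Integrable ψ μ) (hψ' : Integrable ψ' μ) :
    dist (∫ x, g x * ψ x ∂μ) (∫ x, g x * ψ' x ∂μ) ≤ C * ∫ x, ‖ψ x - ψ' x‖ ∂μ := by
  rw [dist_eq_norm, ← integral_sub (hψ.bdd_mul hg hgC) (hψ'.bdd_mul hg hgC), ← integral_const_mul]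
  refine norm_integral_le_of_norm_le ((hψ.sub hψ').norm.const_mul C) ?_
  filter_upwards [hgC] with x hx
  rw [← mul_sub, norm_mul]
  exact mul_le_mul_of_nonneg_right hx (norm_nonneg _)

theorem stronglyMeasurable_integral_of_measurable_coe {Y E : Type*}
    [MeasurableSpace Y] [NormedAddCommGroup E] [NormedSpace ℝ E]
    {ν : X → Measure Y} (hν : ∀ s, MeasurableSet s → Measurable fun x ↦ ν x s)
    {φ : Y → E} (hφ : StronglyMeasurable φ) :
    StronglyMeasurable fun x ↦ ∫ y, φ y ∂ν x :=
  hφ.integral_kernel (κ := ⟨ν, Measure.measurable_of_measurable_coe ν hν⟩)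

variable [TopologicalSpace X] [NormalSpace X] [BorelSpace X] [μ.WeaklyRegular]

theorem tendsto_integral_mul_of_forall_boundedContinuous {ι : Type*} {l : Filter ι}
    {g : ι → X → ℝ} {G : X → ℝ} {C : ℝ}
    (hg : ∀ n, AEStronglyMeasurable (g n) μ) (hgC : ∀ n, ∀ᵐ x ∂μ, ‖g n x‖ ≤ C)
    (hG : AEStronglyMeasurable G μ) (hGC : ∀ᵐ x ∂μ, ‖G x‖ ≤ C)
    (hlim : ∀ ψ : X →ᵇ ℝ, Tendsto (fun n ↦ ∫ x, g n x * ψ x ∂μ) l (𝓝 (∫ x, G x * ψ x ∂μ)))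
    {ψ : X → ℝ} (hψ : Integrable ψ μ) :
    Tendsto (fun n ↦ ∫ x, g n x * ψ x ∂μ) l (𝓝 (∫ x, G x * ψ x ∂μ)) := by
  choose ψ' hψ'_approx hψ'_int using fun k : ℕ ↦
    hψ.exists_boundedContinuous_integral_sub_le (Nat.one_div_pos_of_nat (n := k))
  have h_err : Tendsto (fun k : ℕ ↦ C * ∫ x, ‖ψ x - ψ' k x‖ ∂μ) atTop (𝓝 0) := by
    simpa using (squeeze_zero (fun k ↦ integral_nonneg fun x ↦ norm_nonneg _) hψ'_approx
      tendsto_one_div_add_atTop_nhds_zero_nat).const_mul C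
  have h_uniform : TendstoUniformly (fun k n ↦ ∫ x, g n x * ψ' k x ∂μ)
      (fun n ↦ ∫ x, g n x * ψ x ∂μ) atTop := by
    rw [Metric.tendstoUniformly_iff]
    intro η hη
    filter_upwards [h_err.eventually (gt_mem_nhds hη)] with k hk n
    exact (dist_integral_mul_le_mul_integral_norm_sub (hg n) (hgC n) hψ (hψ'_int k)).trans_lt hk
  refine h_uniform.tendsto_of_eventually_tendsto (Eventually.of_forall fun k ↦ hlim (ψ' k)) ?_
  refine tendsto_iff_dist_tendsto_zero.2 (squeeze_zero (fun _ ↦ dist_nonneg) (fun k ↦ ?_) h_err)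
  rw [dist_comm]
  exact dist_integral_mul_le_mul_integral_norm_sub hG hGC hψ (hψ'_int k)

theorem tendsto_setIntegral_of_forall_boundedContinuous {ι : Type*} {l : Filter ι}
    {g : ι → X → ℝ} {G : X → ℝ} {C : ℝ}
    (hg : ∀ n, AEStronglyMeasurable (g n) μ) (hgC : ∀ n, ∀ᵐ x ∂μ, ‖g n x‖ ≤ C)
    (hG : AEStronglyMeasurable G μ) (hGC : ∀ᵐ x ∂μ, ‖G x‖ ≤ C)
    (hlim : ∀ ψ : X →ᵇ ℝ, Tendsto (fun n ↦ ∫ x, g n x * ψ x ∂μ) l (𝓝 (∫ x, G x * ψ x ∂μ)))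
    {s : Set X} (hs : MeasurableSet s) (hμs : μ s ≠ ∞) :
    Tendsto (fun n ↦ ∫ x in s, g n x ∂μ) l (𝓝 (∫ x in s, G x ∂μ)) := by
  have h := tendsto_integral_mul_of_forall_boundedContinuous hg hgC hG hGC hlim
    ((integrable_indicator_iff hs).2 (integrableOn_const hμs (C := (1 : ℝ))))
  simpa only [← Set.indicator_mul_right, mul_one, integral_indicator hs] using h

end MeasureTheory

theorem integral_occupationMeasure {f : Torus3 → E3} (hf : Measurable f) (x₀ : Torus3) (ε : ℝ)
    (φ : E3 →ᵇ ℝ) :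
    ∫ y, φ y ∂occupationMeasure f x₀ ε =
      (volume (Metric.ball x₀ ε)).toReal⁻¹ * ∫ x in Metric.ball x₀ ε, φ (f x) := by
  rw [occupationMeasure, integral_smul_measure,
    integral_map hf.aemeasurable φ.continuous.aestronglyMeasurable, ENNReal.toReal_inv,
    smul_eq_mul]

theorem occupation_measures_converge_general
    (f : ℕ → Torus3 → E3) (hf : ∀ n, Measurable (f n))
    (ν : Torus3 → Measure E3) (hprob : ∀ x, IsProbabilityMeasure (ν x))
    (hmeas : ∀ E : Set E3, MeasurableSet E → Measurable fun x => ν x E)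
    (hconv : ∀ (φ : BoundedContinuousFunction E3 ℝ) (ψ : BoundedContinuousFunction Torus3 ℝ),
      Filter.Tendsto (fun n => ∫ x, φ (f n x) * ψ x ∂volume) Filter.atTop
        (nhds (∫ x, (∫ y, φ y ∂(ν x)) * ψ x ∂volume)))
    (x₀ : Torus3) (ε : ℝ) :
    ∀ φ : BoundedContinuousFunction E3 ℝ,
      Filter.Tendsto (fun n => ∫ y, φ y ∂(occupationMeasure (f n) x₀ ε)) Filter.atTop
        (nhds ((volume (Metric.ball x₀ ε)).toReal⁻¹ *
          ∫ x in Metric.ball x₀ ε, (∫ y, φ y ∂(ν x)) ∂volume)) := by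
  intro φ
  simp only [integral_occupationMeasure (hf _)]
  refine Tendsto.const_mul _ (tendsto_setIntegral_of_forall_boundedContinuous (C := ‖φ‖)
    (fun n ↦ (φ.continuous.measurable.comp (hf n)).aestronglyMeasurable)
    (fun n ↦ .of_forall fun x ↦ φ.norm_coe_le_norm (f n x))
    (stronglyMeasurable_integral_of_measurable_coe hmeas
      φ.continuous.stronglyMeasurable).aestronglyMeasurable
    (.of_forall fun x ↦ φ.norm_integral_le_norm (ν x)) (hconv φ)
    measurableSet_ball (measure_ne_top _ _))

/-- If `∫ φ(fₙ(x)) ψ(x) dx → ∫ (∫ φ(y) ν_x(dy)) ψ(x) dx` for all bounded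
continuous `φ, ψ`, then for fixed `x₀ ∈ 𝕋³` and `ε > 0` the local occupation measures
`ν^n_{x₀,ε}` of `fₙ` converge weakly to the average `(1/Leb(B(x₀,ε))) ∫_{B(x₀,ε)} ν_x dx`. -/
theorem occupation_measures_converge
    (f : ℕ → Torus3 → E3) (hf : ∀ n, Measurable (f n))
    (ν : Torus3 → Measure E3) (hprob : ∀ x, IsProbabilityMeasure (ν x))
    (hmeas : ∀ E : Set E3, MeasurableSet E → Measurable fun x => ν x E)
    (hconv : ∀ (φ : BoundedContinuousFunction E3 ℝ) (ψ : BoundedContinuousFunction Torus3 ℝ),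
      Filter.Tendsto (fun n => ∫ x, φ (f n x) * ψ x ∂volume) Filter.atTop
        (nhds (∫ x, (∫ y, φ y ∂(ν x)) * ψ x ∂volume)))
    (x₀ : Torus3) (ε : ℝ) (hε : 0 < ε) :
    ∀ φ : BoundedContinuousFunction E3 ℝ,
      Filter.Tendsto (fun n => ∫ y, φ y ∂(occupationMeasure (f n) x₀ ε)) Filter.atTop
        (nhds ((volume (Metric.ball x₀ ε)).toReal⁻¹ *
          ∫ x in Metric.ball x₀ ε, (∫ y, φ y ∂(ν x)) ∂volume)) :=
  occupation_measures_converge_general f hf ν hprob hmeas hconv x₀ ε
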